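/- For every cycle C_n with n ≥ 3, the odd chromatic number χ_o(C_n) satisfies: if n is divisible by 3 then χ_o(C_n) = 3, and χ_o(C_n) ≤ 5 in all cases. -/

import Mathlib

/-- A proper coloring of a simple graph: adjacent vertices get different colors. -/
def ProperColoring {V : Type*} (G : SimpleGraph V) (c : V → ℕ) : Prop :=
  ∀ ⦃u v : V⦄, G.Adj u v → c u ≠ c v

/-- The number of neighbors of `v` receiving color `k`. -/
noncomputable def colorCount {V : Type*} (G : SimpleGraph V) (c : V → ℕ) (v : V) (k : ℕ) : ℕ :=
  (G.neighborSet v ∩ {u | c u = k}).ncard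

/-- An odd coloring: a proper coloring such that every non-isolated vertex has some
color appearing an odd number of times in its neighborhood. -/
def OddColoring {V : Type*} (G : SimpleGraph V) (c : V → ℕ) : Prop :=
  ProperColoring G c ∧
    ∀ v : V, (G.neighborSet v).Nonempty → ∃ k : ℕ, Odd (colorCount G c v k)

/-- `G` is odd `k`-colorable if it has an odd coloring using colors `0, …, k-1`. -/
def OddColorable {V : Type*} (G : SimpleGraph V) (k : ℕ) : Prop :=
  ∃ c : V → ℕ, OddColoring G c ∧ ∀ v, c v < k

/-- The odd chromatic number: the least `k` such that `G` is odd `k`-colorable. -/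
noncomputable def oddChromaticNumber {V : Type*} (G : SimpleGraph V) : ℕ :=
  sInf {k | OddColorable G k}

/-!
In a cycle every vertex has exactly two neighbours, so the parity condition at `v` just says
that `v - 1` and `v + 1` get different colors: an odd coloring of `C_n` is a coloring in
which vertices at distance one or two differ. Three consecutive vertices then need three
colors. Conversely, color the first `3 ⌊n / 3⌋` vertices `0, 1, 2, 0, 1, 2, …` and the at most
two remaining ones with the fresh colors `3, 4`; this uses only `0, 1, 2` when `3 ∣ n`.
-/

open SimpleGraph

section OddChromaticNumber

variable {V : Type*} {G : SimpleGraph V}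

theorem OddColorable.mono {k l : ℕ} (h : OddColorable G k) (hkl : k ≤ l) : OddColorable G l :=
  let ⟨c, hc, hlt⟩ := h
  ⟨c, hc, fun v => (hlt v).trans_le hkl⟩

theorem oddChromaticNumber_le {k : ℕ} (h : OddColorable G k) : oddChromaticNumber G ≤ k :=
  Nat.sInf_le h

theorem lt_oddChromaticNumber {k l : ℕ} (hl : OddColorable G l) (hk : ¬ OddColorable G k) :
    k < oddChromaticNumber G := by
  by_contra! hle
  exact hk ((Nat.sInf_mem (s := {k | OddColorable G k}) ⟨l, hl⟩).mono hle)

theorem colorCount_of_neighborSet_eq_pair {c : V → ℕ} {v u w : V}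
    (hv : G.neighborSet v = {u, w}) (huw : u ≠ w) (k : ℕ) :
    colorCount G c v k = (if c u = k then 1 else 0) + (if c w = k then 1 else 0) := by
  unfold colorCount
  rw [hv]
  by_cases hu : c u = k <;> by_cases hw : c w = k <;>
    simp [Set.insert_inter_of_mem, Set.insert_inter_of_notMem, Set.singleton_inter_of_mem,
      Set.singleton_inter_of_notMem, Set.ncard_pair huw, hu, hw]

theorem exists_odd_colorCount_iff_of_neighborSet_eq_pair {c : V → ℕ} {v u w : V}
    (hv : G.neighborSet v = {u, w}) (huw : u ≠ w) :
    (∃ k, Odd (colorCount G c v k)) ↔ c u ≠ c w := by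
  simp only [colorCount_of_neighborSet_eq_pair hv huw]
  constructor
  · rintro ⟨k, hk⟩ hcuw
    by_cases hu : c u = k <;> simp_all [Nat.odd_iff]
  · intro hcuw
    exact ⟨c u, by simp [Ne.symm hcuw]⟩

end OddChromaticNumber

section CycleGraph

variable {m : ℕ}

theorem Fin.sub_one_ne_add_one (v : Fin (m + 3)) : v - 1 ≠ v + 1 := by
  intro h
  have h2 : (2 : Fin (m + 3)) = 0 := by
    calc (2 : Fin (m + 3)) = (v + 1) - (v - 1) := by abel
      _ = 0 := by rw [h, sub_self]
  have hval := congrArg Fin.val h2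
  rw [Fin.val_two, Fin.val_zero] at hval
  omega

theorem oddColoring_cycleGraph_iff {c : Fin (m + 3) → ℕ} :
    OddColoring (cycleGraph (m + 3)) c ↔ ∀ v, c (v + 1) ≠ c v ∧ c (v + 2) ≠ c v := by
  have hproper : ProperColoring (cycleGraph (m + 3)) c ↔ ∀ v, c (v + 1) ≠ c v := by
    refine ⟨fun h v => (h (cycleGraph_adj.2 (Or.inr (add_sub_cancel_left v 1)))).symm, ?_⟩
    rintro h u v (huv | huv)
    · rw [sub_eq_iff_eq_add'] at huv
      exact huv ▸ h v
    · rw [sub_eq_iff_eq_add'] at huv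
      exact huv ▸ (h u).symm
  have hparity : (∀ v, ((cycleGraph (m + 3)).neighborSet v).Nonempty →
      ∃ k, Odd (colorCount (cycleGraph (m + 3)) c v k)) ↔ ∀ v, c (v + 2) ≠ c v := by
    have hnbr (v : Fin (m + 3)) := cycleGraph_neighborSet (n := m + 1) (v := v)
    simp only [hnbr, Set.insert_nonempty, forall_const,
      exists_odd_colorCount_iff_of_neighborSet_eq_pair (hnbr _) (Fin.sub_one_ne_add_one _)]
    refine ⟨fun h v => ?_, fun h v => ?_⟩
    · have hv := h (v + 1)
      rwa [add_sub_cancel_right, show v + 1 + 1 = v + 2 by open Fin.CommRing in ring, ne_comm] at hv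
    · have hv := h (v - 1)
      rwa [show v - 1 + 2 = v + 1 by open Fin.CommRing in ring, ne_comm] at hv
  simp only [OddColoring, hproper, hparity, forall_and]

def cyclePattern (n x : ℕ) : ℕ :=
  if x < 3 * (n / 3) then x % 3 else x - 3 * (n / 3) + 3

theorem cyclePattern_add_mod_ne {n x d : ℕ} (hn : 3 ≤ n) (hx : x < n) (hd₀ : 0 < d)
    (hd₂ : d ≤ 2) : cyclePattern n ((x + d) % n) ≠ cyclePattern n x := by
  have hmod : (x + d) % n = if x + d < n then x + d else x + d - n := by
    split_ifs with h
    · exact Nat.mod_eq_of_lt h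
    · rw [Nat.mod_eq_sub_mod (not_lt.1 h), Nat.mod_eq_of_lt (by omega)]
  rw [hmod]
  unfold cyclePattern
  split_ifs <;> omega

theorem oddColoring_cyclePattern :
    OddColoring (cycleGraph (m + 3)) (fun v => cyclePattern (m + 3) v) := by
  refine oddColoring_cycleGraph_iff.2 fun v => ⟨?_, ?_⟩ <;>
    simpa only [Fin.val_add, Fin.val_one, Fin.val_two] using
      cyclePattern_add_mod_ne (by omega) v.isLt (by norm_num) (by norm_num)

theorem oddColorable_cycleGraph_five : OddColorable (cycleGraph (m + 3)) 5 := by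
  refine ⟨_, oddColoring_cyclePattern, fun v => ?_⟩
  have := v.isLt
  unfold cyclePattern
  split_ifs <;> omega

theorem oddColorable_cycleGraph_three (h : 3 ∣ m + 3) : OddColorable (cycleGraph (m + 3)) 3 := by
  refine ⟨_, oddColoring_cyclePattern, fun v => ?_⟩
  have := v.isLt
  unfold cyclePattern
  split_ifs <;> omega

theorem not_oddColorable_cycleGraph_two : ¬ OddColorable (cycleGraph (m + 3)) 2 := by
  rintro ⟨c, hc, hlt⟩
  obtain ⟨h10, h20⟩ := oddColoring_cycleGraph_iff.1 hc 0
  have h21 := (oddColoring_cycleGraph_iff.1 hc 1).1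
  simp only [zero_add] at h10 h20
  rw [show (1 : Fin (m + 3)) + 1 = 2 by open Fin.CommRing in ring] at h21
  have := hlt 0
  have := hlt 1
  have := hlt 2
  omega

end CycleGraph

/-- For every cycle `C_n` with `n ≥ 3`: if `3 ∣ n` then `χ_o(C_n) = 3`, and in all cases
`χ_o(C_n) ≤ 5`. -/
theorem stmt16 (n : ℕ) (hn : 3 ≤ n) :
    (3 ∣ n → oddChromaticNumber (SimpleGraph.cycleGraph n) = 3) ∧
      oddChromaticNumber (SimpleGraph.cycleGraph n) ≤ 5 := by
  obtain ⟨m, rfl⟩ := Nat.exists_eq_add_of_le' hn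
  refine ⟨fun h3 => le_antisymm ?_ ?_, oddChromaticNumber_le oddColorable_cycleGraph_five⟩
  · exact oddChromaticNumber_le (oddColorable_cycleGraph_three h3)
  · exact lt_oddChromaticNumber oddColorable_cycleGraph_five not_oddColorable_cycleGraph_two
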